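/- Let X be the derivation X = u1 ∂/∂u + v1 ∂/∂v + u2 ∂/∂u1 + v2 ∂/∂v1 + u3 ∂/∂u2 + v3 ∂/∂v2 + … on functions of the variables u, v, u1, v1, u2, v2, …, each depending on finitely many variables. If Z = Σ_{i≥1} (δ_i ∂/∂u_i + ε_i ∂/∂v_i) is a vector field with coefficients δ_i, ε_i depending on finitely many of the variables u, v, u1, v1, …, then [X, Z] = 0 implies Z = 0. -/
import Mathlib


/-- Jet variables for the system `u_{xy} = v_x`, `v_{xy} = 12 u u_x`:
`uu k` is `u_k` (with `uu 0 = u`) and `vv k` is `v_k` (with `vv 0 = v`). -/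
abbrev J : Type := Fin 2 × ℕ

/-- The variable `u_k`. -/
def uu (k : ℕ) : J := (0, k)

/-- The variable `v_k`. -/
def vv (k : ℕ) : J := (1, k)

/-- Partial derivative of `f` with respect to coordinate `i` at the point `z`. -/
noncomputable def pd {ι : Type*} [DecidableEq ι] (i : ι) (f : (ι → ℝ) → ℝ) (z : ι → ℝ) : ℝ :=
  deriv (fun t => f (Function.update z i t)) (z i)

/-- A function of the jet variables depending smoothly on finitely many of them. -/
def SmoothCyl {ι : Type*} (f : (ι → ℝ) → ℝ) : Prop :=
  ∃ (n : ℕ) (v : Fin n → ι) (g : (Fin n → ℝ) → ℝ),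
    ContDiff ℝ (⊤ : ℕ∞) g ∧ ∀ z, f z = g fun k => z (v k)

/-- The total `x`-derivative `X = u1 ∂/∂u + v1 ∂/∂v + u2 ∂/∂u1 + v2 ∂/∂v1 + …`. -/
noncomputable def Xop (f : (J → ℝ) → ℝ) (z : J → ℝ) : ℝ :=
  ∑' k : ℕ, (z (uu (k + 1)) * pd (uu k) f z + z (vv (k + 1)) * pd (vv k) f z)

/-- The vector field `Z = Σ_{i≥1} (δ_i ∂/∂u_i + ε_i ∂/∂v_i)`; here `d i`, `e i` are the
coefficients of `∂/∂u_{i+1}`, `∂/∂v_{i+1}`. -/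
noncomputable def Zop (d e : ℕ → (J → ℝ) → ℝ) (f : (J → ℝ) → ℝ) (z : J → ℝ) : ℝ :=
  ∑' i : ℕ, (d i z * pd (uu (i + 1)) f z + e i z * pd (vv (i + 1)) f z)

lemma pd_coord {ι : Type*} [DecidableEq ι] (i j : ι) (z : ι → ℝ) :
    pd i (fun w => w j) z = if i = j then 1 else 0 := by
  unfold pd
  split
  · next h => subst h; simp
  · next h =>
      have : (fun t => Function.update z i t j) = fun _ => z j := by
        funext t; exact Function.update_of_ne (Ne.symm h) _ _
      rw [this]; simp

lemma uu_eq_uu {a b : ℕ} : uu a = uu b ↔ a = b := by simp [uu, Prod.ext_iff]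
lemma vv_eq_vv {a b : ℕ} : vv a = vv b ↔ a = b := by simp [vv, Prod.ext_iff]
lemma uu_ne_vv {a b : ℕ} : uu a ≠ vv b := by simp [uu, vv, Prod.ext_iff]
lemma vv_ne_uu {a b : ℕ} : vv a ≠ uu b := by simp [uu, vv, Prod.ext_iff]

lemma Xop_zero (z : J → ℝ) : Xop (fun _ => 0) z = 0 := by
  unfold Xop
  have hp : ∀ i : J, pd i (fun _ => (0:ℝ)) z = 0 := by
    intro i; unfold pd; simp
  simp [hp]

lemma Xop_coord_u (k : ℕ) (z : J → ℝ) :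
    Xop (fun w => w (uu k)) z = z (uu (k + 1)) := by
  unfold Xop
  rw [tsum_eq_single k]
  · simp [pd_coord, uu_eq_uu, vv_ne_uu]
  · intro b hb
    simp [pd_coord, uu_eq_uu, vv_ne_uu, hb]

lemma Xop_coord_v (k : ℕ) (z : J → ℝ) :
    Xop (fun w => w (vv k)) z = z (vv (k + 1)) := by
  unfold Xop
  rw [tsum_eq_single k]
  · simp [pd_coord, vv_eq_vv, uu_ne_vv]
  · intro b hb
    simp [pd_coord, vv_eq_vv, uu_ne_vv, hb]

lemma Zop_coord_u (d e : ℕ → (J → ℝ) → ℝ) (m : ℕ) (z : J → ℝ) :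
    Zop d e (fun w => w (uu (m + 1))) z = d m z := by
  unfold Zop
  rw [tsum_eq_single m]
  · simp [pd_coord, uu_eq_uu, vv_ne_uu]
  · intro b hb
    simp [pd_coord, uu_eq_uu, vv_ne_uu, hb]

lemma Zop_coord_v (d e : ℕ → (J → ℝ) → ℝ) (m : ℕ) (z : J → ℝ) :
    Zop d e (fun w => w (vv (m + 1))) z = e m z := by
  unfold Zop
  rw [tsum_eq_single m]
  · simp [pd_coord, vv_eq_vv, uu_ne_vv]
  · intro b hb
    simp [pd_coord, vv_eq_vv, uu_ne_vv, hb]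

lemma Zop_coord_u0 (d e : ℕ → (J → ℝ) → ℝ) (z : J → ℝ) :
    Zop d e (fun w => w (uu 0)) z = 0 := by
  unfold Zop
  have : ∀ i : ℕ, d i z * pd (uu (i + 1)) (fun w => w (uu 0)) z
      + e i z * pd (vv (i + 1)) (fun w => w (uu 0)) z = 0 := by
    intro i
    simp [pd_coord, uu_eq_uu, vv_ne_uu]
  simp [this]

lemma Zop_coord_v0 (d e : ℕ → (J → ℝ) → ℝ) (z : J → ℝ) :
    Zop d e (fun w => w (vv 0)) z = 0 := by
  unfold Zop
  have : ∀ i : ℕ, d i z * pd (uu (i + 1)) (fun w => w (vv 0)) z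
      + e i z * pd (vv (i + 1)) (fun w => w (vv 0)) z = 0 := by
    intro i
    simp [pd_coord, vv_eq_vv, uu_ne_vv]
  simp [this]

/-- Lemma 2: if `Z = Σ_{i≥1} (δ_i ∂/∂u_i + ε_i ∂/∂v_i)` has coefficients depending smoothly on
finitely many jet variables, finitely many of them nonzero, and `[X, Z] = 0`, then `Z = 0`. -/
theorem stmt6 (d e : ℕ → (J → ℝ) → ℝ)
    (hd : ∀ i, SmoothCyl (d i)) (he : ∀ i, SmoothCyl (e i))
    (hfin : ∃ N, ∀ i, N ≤ i → d i = 0 ∧ e i = 0)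
    (hcomm : ∀ f z, Xop (Zop d e f) z = Zop d e (Xop f) z) :
    ∀ i, d i = 0 ∧ e i = 0 := by
  intro i
  induction i with
  | zero =>
    constructor
    · funext z
      have h := hcomm (fun w => w (uu 0)) z
      have hz : Zop d e (fun w => w (uu 0)) = fun _ => 0 :=
        funext fun w => Zop_coord_u0 d e w
      have hx : Xop (fun w => w (uu 0)) = fun w => w (uu 1) :=
        funext fun w => Xop_coord_u 0 w
      rw [hz, hx, Xop_zero] at h
      have := Zop_coord_u d e 0 z
      simp only [Nat.zero_add] at this
      rw [this] at h
      simpa using h.symm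
    · funext z
      have h := hcomm (fun w => w (vv 0)) z
      have hz : Zop d e (fun w => w (vv 0)) = fun _ => 0 :=
        funext fun w => Zop_coord_v0 d e w
      have hx : Xop (fun w => w (vv 0)) = fun w => w (vv 1) :=
        funext fun w => Xop_coord_v 0 w
      rw [hz, hx, Xop_zero] at h
      have := Zop_coord_v d e 0 z
      simp only [Nat.zero_add] at this
      rw [this] at h
      simpa using h.symm
  | succ n ih =>
    constructor
    · funext z
      have h := hcomm (fun w => w (uu (n + 1))) z
      have hz : Zop d e (fun w => w (uu (n + 1))) = fun _ => 0 := by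
        funext w; rw [Zop_coord_u d e n w, ih.1]; rfl
      have hx : Xop (fun w => w (uu (n + 1))) = fun w => w (uu (n + 2)) :=
        funext fun w => Xop_coord_u (n + 1) w
      rw [hz, hx, Xop_zero, Zop_coord_u d e (n + 1) z] at h
      simpa using h.symm
    · funext z
      have h := hcomm (fun w => w (vv (n + 1))) z
      have hz : Zop d e (fun w => w (vv (n + 1))) = fun _ => 0 := by
        funext w; rw [Zop_coord_v d e n w, ih.2]; rfl
      have hx : Xop (fun w => w (vv (n + 1))) = fun w => w (vv (n + 2)) :=
        funext fun w => Xop_coord_v (n + 1) w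
      rw [hz, hx, Xop_zero, Zop_coord_v d e (n + 1) z] at h
      simpa using h.symm
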